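/- Let ψ_σ(ξ) = (2π)^{d/2}σ^d e^{-2π²σ²‖ξ‖²} and define the weighted norm N(σ) = ∫_{ℝ^d} (1+‖ξ‖²)^{α/2} |ψ_σ(ξ)|² dξ (the squared H^{α/2}-norm of F⁻¹[ψ_σ]). Then lim_{σ→0⁺} N(σ) = 0 if α < d, equals C_d = (1/2)(d-1)!(2π)^{-d}·2π^{d/2}/Γ(d/2) if α = d, and equals +∞ if α > d. -/

import Mathlib

/-!
The substitution `η = σ ξ` gives `N σ = (2π)^d σ^(d-α) M σ` with
`M σ = ∫ (σ² + ‖η‖²)^(α/2) exp(-4π²‖η‖²) dη`. By dominated convergence `M` is continuous at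
`σ = 0`, and in polar coordinates `M 0 = π^(d/2) Γ((α+d)/2) / (Γ(d/2) (4π²)^((α+d)/2)) > 0`.
So the behaviour of `N` as `σ → 0⁺` is that of `σ^(d-α)`.
-/

open MeasureTheory Real Filter
open Set Module Topology Nat

lemma rpow_le_mul_exp_mul {s b y : ℝ} (hs : 0 ≤ s) (hb : 0 < b) (hy : 0 ≤ y) :
    y ^ s ≤ ⌈s⌉₊ ! / b ^ ⌈s⌉₊ * rexp b * rexp (b * y) := by
  set n := ⌈s⌉₊
  have hpow : y ^ s ≤ (1 + y) ^ n :=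
    calc y ^ s ≤ (1 + y) ^ s := rpow_le_rpow hy (by linarith) hs
      _ ≤ (1 + y) ^ (n : ℝ) := rpow_le_rpow_of_exponent_le (by linarith) (le_ceil s)
      _ = (1 + y) ^ n := rpow_natCast _ _
  have hexp := pow_div_factorial_le_exp (x := b * (1 + y)) (by positivity) n
  rw [div_le_iff₀ (by positivity), mul_pow] at hexp
  calc y ^ s ≤ (1 + y) ^ n := hpow
    _ = b ^ n * (1 + y) ^ n / b ^ n := by field_simp
    _ ≤ rexp (b * (1 + y)) * n ! / b ^ n := by gcongr
    _ = _ := by rw [mul_one_add, exp_add]; ring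

section

variable {V : Type*} [NormedAddCommGroup V] [InnerProductSpace ℝ V] [FiniteDimensional ℝ V]
  [MeasurableSpace V] [BorelSpace V]

lemma integrable_exp_neg_mul_norm_sq {b : ℝ} (hb : 0 < b) :
    Integrable fun v : V => rexp (-b * ‖v‖ ^ 2) := by
  refine (GaussianFourier.integrable_cexp_neg_mul_sq_norm_add
    (b := (b : ℂ)) (by simpa using hb) 0 (0 : V)).norm.congr (.of_forall fun v => ?_)
  simp [Complex.norm_exp, ← Complex.ofReal_pow]

variable (V) in
noncomputable def gaussianBracketMoment (s c σ : ℝ) : ℝ :=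
  ∫ v : V, (σ ^ 2 + ‖v‖ ^ 2) ^ s * rexp (-c * ‖v‖ ^ 2)

lemma integrable_sq_add_norm_sq_rpow_mul_exp {s c : ℝ} (σ : ℝ) (hs : 0 ≤ s) (hc : 0 < c) :
    Integrable fun v : V => (σ ^ 2 + ‖v‖ ^ 2) ^ s * rexp (-c * ‖v‖ ^ 2) := by
  set K := ⌈s⌉₊ ! / (c / 2) ^ ⌈s⌉₊ * rexp (c / 2) * rexp (c / 2 * σ ^ 2)
  refine ((integrable_exp_neg_mul_norm_sq (V := V) (half_pos hc)).const_mul K).mono'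
    (by fun_prop) (.of_forall fun v => ?_)
  have hbound := rpow_le_mul_exp_mul hs (half_pos hc) (by positivity : 0 ≤ σ ^ 2 + ‖v‖ ^ 2)
  rw [norm_of_nonneg (by positivity)]
  calc (σ ^ 2 + ‖v‖ ^ 2) ^ s * rexp (-c * ‖v‖ ^ 2)
      ≤ ⌈s⌉₊ ! / (c / 2) ^ ⌈s⌉₊ * rexp (c / 2) * rexp (c / 2 * (σ ^ 2 + ‖v‖ ^ 2)) *
        rexp (-c * ‖v‖ ^ 2) := by gcongr
    _ = K * rexp (-(c / 2) * ‖v‖ ^ 2) := by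
      have : c / 2 * (σ ^ 2 + ‖v‖ ^ 2) + -c * ‖v‖ ^ 2 = c / 2 * σ ^ 2 + -(c / 2) * ‖v‖ ^ 2 := by
        ring
      rw [mul_assoc, ← exp_add, this, exp_add]; ring

lemma continuousAt_gaussianBracketMoment_zero {s c : ℝ} (hs : 0 ≤ s) (hc : 0 < c) :
    ContinuousAt (gaussianBracketMoment V s c) 0 := by
  refine continuousAt_of_dominated (.of_forall fun σ => (by fun_prop))
    (bound := fun v => (1 ^ 2 + ‖v‖ ^ 2) ^ s * rexp (-c * ‖v‖ ^ 2)) ?_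
    (integrable_sq_add_norm_sq_rpow_mul_exp 1 hs hc) (.of_forall fun v => ?_)
  · filter_upwards [Icc_mem_nhds (neg_one_lt_zero : (-1 : ℝ) < 0) one_pos] with σ hσ
    refine .of_forall fun v => ?_
    rw [norm_of_nonneg (by positivity)]
    have : σ ^ 2 ≤ 1 ^ 2 := sq_le_sq' hσ.1 hσ.2
    gcongr
  · exact ((continuous_pow 2).add continuous_const).rpow_const (fun _ => Or.inr hs)
      |>.continuousAt.mul continuousAt_const

lemma gaussianBracketMoment_eq_rpow_mul_integral {s c σ : ℝ} (hσ : 0 < σ) :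
    gaussianBracketMoment V s c σ = σ ^ (2 * s + finrank ℝ V) *
      ∫ v : V, (1 + ‖v‖ ^ 2) ^ s * rexp (-c * σ ^ 2 * ‖v‖ ^ 2) := by
  have hscale := Measure.integral_comp_smul_of_nonneg volume
    (fun v : V => (σ ^ 2 + ‖v‖ ^ 2) ^ s * rexp (-c * ‖v‖ ^ 2)) σ (hR := hσ.le)
  have hpt : ∀ v : V, (σ ^ 2 + ‖σ • v‖ ^ 2) ^ s * rexp (-c * ‖σ • v‖ ^ 2) =
      σ ^ (2 * s) * ((1 + ‖v‖ ^ 2) ^ s * rexp (-c * σ ^ 2 * ‖v‖ ^ 2)) := fun v => by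
    rw [norm_smul, norm_of_nonneg hσ.le, mul_pow, ← mul_one_add, mul_rpow (by positivity)
      (by positivity), ← rpow_natCast, ← rpow_mul hσ.le]
    push_cast; ring_nf
  simp only [hpt, integral_const_mul, smul_eq_mul] at hscale
  rw [gaussianBracketMoment, rpow_add hσ, rpow_natCast, mul_comm (σ ^ (2 * s)), mul_assoc,
    hscale, mul_inv_cancel_left₀ (pow_pos hσ _).ne']

lemma volume_real_ball_zero_one [Nontrivial V] :
    volume.real (Metric.ball (0 : V) 1) =
      π ^ (finrank ℝ V / 2 : ℝ) / Gamma (finrank ℝ V / 2 + 1) := by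
  rw [Measure.real, InnerProductSpace.volume_ball, ENNReal.ofReal_one, one_pow, one_mul,
    ENNReal.toReal_ofReal (by positivity), sqrt_eq_rpow, ← rpow_natCast, ← rpow_mul pi_pos.le]
  ring_nf

lemma gaussianBracketMoment_zero [Nontrivial V] {s c : ℝ}
    (hs : -(finrank ℝ V / 2 : ℝ) < s) (hc : 0 < c) :
    gaussianBracketMoment V s c 0 = π ^ (finrank ℝ V / 2 : ℝ) * Gamma (s + finrank ℝ V / 2) /
      (Gamma (finrank ℝ V / 2) * c ^ (s + finrank ℝ V / 2)) := by
  set n := finrank ℝ V with hn_def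
  have hn : 0 < n := finrank_pos
  have hradial : ∫ y in Ioi (0 : ℝ), y ^ (n - 1) • ((0 ^ 2 + y ^ 2) ^ s * rexp (-c * y ^ 2)) =
      c ^ (-(s + n / 2)) * (1 / 2) * Gamma (s + n / 2) := by
    have hq : -1 < 2 * s + n - 1 := by linarith
    rw [← show (2 * s + n - 1 + 1) / 2 = s + n / 2 by ring, ← neg_div,
      ← integral_rpow_mul_exp_neg_mul_rpow two_pos hq hc]
    refine setIntegral_congr_fun measurableSet_Ioi fun y (hy : 0 < y) => ?_
    have hpow : y ^ (n - 1) = y ^ ((n : ℝ) - 1) := by rw [← rpow_natCast, cast_sub hn, cast_one]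
    have hsq : (0 ^ 2 + y ^ 2) ^ s = y ^ (2 * s) := by
      rw [zero_pow two_ne_zero, zero_add, ← rpow_natCast, ← rpow_mul hy.le, cast_ofNat]
    rw [smul_eq_mul, hpow, hsq, ← mul_assoc, ← rpow_add hy, rpow_two]
    ring_nf
  have hΓ : Gamma (n / 2 + 1) = n / 2 * Gamma (n / 2) := Gamma_add_one (by positivity)
  rw [gaussianBracketMoment, integral_fun_norm_addHaar volume
    (fun y => (0 ^ 2 + y ^ 2) ^ s * rexp (-c * y ^ 2)), hradial, volume_real_ball_zero_one, hΓ,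
    rpow_neg hc.le, nsmul_eq_mul, smul_eq_mul]
  simp only [← hn_def]
  have : 0 < Gamma (n / 2) := Gamma_pos_of_pos (by positivity)
  field_simp

lemma gaussianBracketMoment_zero_pos [Nontrivial V] {s c : ℝ}
    (hs : -(finrank ℝ V / 2 : ℝ) < s) (hc : 0 < c) : 0 < gaussianBracketMoment V s c 0 := by
  rw [gaussianBracketMoment_zero hs hc]
  have hn : (0 : ℝ) < finrank ℝ V := cast_pos.2 finrank_pos
  have : 0 < Gamma (s + finrank ℝ V / 2) := Gamma_pos_of_pos (by linarith)
  have : 0 < Gamma (finrank ℝ V / 2) := Gamma_pos_of_pos (by positivity)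
  positivity

lemma integral_one_add_norm_sq_rpow_mul_sq_gaussian {α σ : ℝ} (hσ : 0 < σ) :
    ∫ ξ : V, (1 + ‖ξ‖ ^ 2) ^ (α / 2) * |(2 * π) ^ ((finrank ℝ V : ℝ) / 2) * σ ^ finrank ℝ V *
      rexp (-2 * π ^ 2 * σ ^ 2 * ‖ξ‖ ^ 2)| ^ 2 =
    (2 * π) ^ (finrank ℝ V : ℝ) * σ ^ ((finrank ℝ V : ℝ) - α) *
      gaussianBracketMoment V (α / 2) (4 * π ^ 2) σ := by
  have hpt : ∀ ξ : V, (1 + ‖ξ‖ ^ 2) ^ (α / 2) * |(2 * π) ^ ((finrank ℝ V : ℝ) / 2) *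
      σ ^ finrank ℝ V * rexp (-2 * π ^ 2 * σ ^ 2 * ‖ξ‖ ^ 2)| ^ 2 =
      (2 * π) ^ (finrank ℝ V : ℝ) * (σ ^ finrank ℝ V) ^ 2 *
        ((1 + ‖ξ‖ ^ 2) ^ (α / 2) * rexp (-(4 * π ^ 2) * σ ^ 2 * ‖ξ‖ ^ 2)) := fun ξ => by
    have hconst : ((2 * π) ^ ((finrank ℝ V : ℝ) / 2)) ^ 2 = (2 * π) ^ (finrank ℝ V : ℝ) := by
      rw [← rpow_mul_natCast (by positivity)]; ring_nf
    rw [sq_abs, mul_pow, mul_pow, hconst, ← exp_nat_mul]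
    ring_nf
  have hσpow : σ ^ ((finrank ℝ V : ℝ) - α) * σ ^ (2 * (α / 2) + finrank ℝ V) =
      (σ ^ finrank ℝ V) ^ 2 := by
    rw [← rpow_add hσ, ← rpow_natCast, ← rpow_natCast, ← rpow_mul hσ.le]
    ring_nf
  simp only [hpt, integral_const_mul]
  rw [gaussianBracketMoment_eq_rpow_mul_integral hσ, ← hσpow]
  ring

end

lemma two_pi_rpow_mul_gaussianBracketMoment_half_dim_zero (d : ℕ) (hd : 1 ≤ d) :
    (2 * π) ^ (d : ℝ) * gaussianBracketMoment (EuclideanSpace ℝ (Fin d)) (d / 2) (4 * π ^ 2) 0 =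
      1 / 2 * (d - 1)! * (2 * π) ^ (-(d : ℝ)) * (2 * π ^ ((d : ℝ) / 2) / Gamma ((d : ℝ) / 2)) := by
  have : Nonempty (Fin d) := Fin.pos_iff_nonempty.1 hd
  have hΓ : Gamma d = (d - 1)! := by
    rw [← Gamma_nat_eq_factorial, cast_sub hd, cast_one, sub_add_cancel]
  have h4π : (4 * π ^ 2) ^ (d : ℝ) = (2 * π) ^ (d : ℝ) * (2 * π) ^ (d : ℝ) := by
    rw [← mul_rpow (by positivity) (by positivity)]; ring_nf
  rw [gaussianBracketMoment_zero (by simp; positivity) (by positivity), finrank_euclideanSpace_fin,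
    add_halves, hΓ, h4π, rpow_neg (by positivity)]
  have : 0 < Gamma ((d : ℝ) / 2) := Gamma_pos_of_pos (by positivity)
  field_simp

/-- Trichotomy for the weighted (squared `H^{α/2}`) norm
`N(σ) = ∫ (1+‖ξ‖²)^{α/2} |ψ_σ(ξ)|² dξ` as `σ → 0⁺`:
it tends to `0` if `α < d`, to `C_d` if `α = d`, and to `+∞` if `α > d`. -/
theorem sobolev_norm_trichotomy (d : ℕ) (hd : 1 ≤ d) (α : ℝ) (hα : 0 ≤ α)
    (ψ : ℝ → EuclideanSpace ℝ (Fin d) → ℝ)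
    (hψ : ∀ σ ξ, ψ σ ξ = (2 * π) ^ ((d : ℝ) / 2) * σ ^ d *
      Real.exp (-2 * π ^ 2 * σ ^ 2 * ‖ξ‖ ^ 2))
    (N : ℝ → ℝ)
    (hN : ∀ σ, N σ = ∫ ξ : EuclideanSpace ℝ (Fin d),
      (1 + ‖ξ‖ ^ 2) ^ (α / 2) * |ψ σ ξ| ^ 2) :
    (α < d → Tendsto N (nhdsWithin 0 (Set.Ioi 0)) (nhds 0)) ∧
    (α = d → Tendsto N (nhdsWithin 0 (Set.Ioi 0))
      (nhds ((1 / 2) * (Nat.factorial (d - 1) : ℝ) * (2 * π) ^ (-(d : ℝ)) *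
        (2 * π ^ ((d : ℝ) / 2) / Real.Gamma ((d : ℝ) / 2))))) ∧
    ((d : ℝ) < α → Tendsto N (nhdsWithin 0 (Set.Ioi 0)) atTop) := by
  set M := gaussianBracketMoment (EuclideanSpace ℝ (Fin d)) (α / 2) (4 * π ^ 2)
  have hNM : (fun σ => (2 * π) ^ (d : ℝ) * M σ * σ ^ ((d : ℝ) - α)) =ᶠ[𝓝[>] 0] N := by
    filter_upwards [self_mem_nhdsWithin] with σ hσ
    have h := integral_one_add_norm_sq_rpow_mul_sq_gaussian (V := EuclideanSpace ℝ (Fin d))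
      (α := α) hσ
    rw [finrank_euclideanSpace_fin] at h
    simp only [hN, hψ, h]
    ring
  have hM : Tendsto (fun σ => (2 * π) ^ (d : ℝ) * M σ) (𝓝[>] 0) (𝓝 ((2 * π) ^ (d : ℝ) * M 0)) :=
    ((continuousAt_gaussianBracketMoment_zero (by positivity) (by positivity)).tendsto.mono_left
      nhdsWithin_le_nhds).const_mul _
  refine ⟨fun hlt => ?_, fun heq => ?_, fun hgt => ?_⟩
  · have hpow : Tendsto (fun σ : ℝ => σ ^ ((d : ℝ) - α)) (𝓝[>] 0) (𝓝 0) :=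
      (tendsto_nhdsWithin_of_tendsto_nhds tendsto_id).rpow_const_nhds_zero (sub_pos.2 hlt)
    simpa using (hM.mul hpow).congr' hNM
  · subst heq
    simp only [sub_self, rpow_zero, mul_one] at hNM
    rw [← two_pi_rpow_mul_gaussianBracketMoment_half_dim_zero d hd]
    exact hM.congr' hNM
  · have : Nonempty (Fin d) := Fin.pos_iff_nonempty.1 hd
    have hM0 : 0 < M 0 := gaussianBracketMoment_zero_pos
      (by rw [finrank_euclideanSpace_fin]; linarith [(d.cast_nonneg : (0 : ℝ) ≤ d)]) (by positivity)
    exact (hM.pos_mul_atTop (by positivity)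
      (tendsto_rpow_neg_nhdsGT_zero (sub_neg.2 hgt))).congr' hNM
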